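/- arXiv:1604.01081 — 5 statements merged into one kernel-verified Lean document; each statement's English description precedes it below -/
import Mathlib

section
/- Piola transform divergence identity: let Φ : Û → U be a C² diffeomorphism between open subsets of ℝ^{N+1}, let F : U → ℝ^{N+1} be C¹, and define the Piola pullback F̂ = det(DΦ) · (DΦ)⁻¹ · (F ∘ Φ). Then div F̂ = det(DΦ) · ((div F) ∘ Φ) on Û. -/
/-!
On `Û` the Jacobian `DΦ` is invertible (its left inverse is `DΨ ∘ Φ`), so
`F̂ = det(DΦ) (DΦ)⁻¹ (F ∘ Φ) = adj(DΦ) (F ∘ Φ)` near every point of `Û`. By the product rule,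
`div (adj(DΦ) (F ∘ Φ))` is `∑ⱼ (div of the j-th column of adj(DΦ)) · (F ∘ Φ)ⱼ` plus
`tr (adj(DΦ) · DF(Φ) · DΦ) = det(DΦ) · (div F) ∘ Φ`. The first sum vanishes (Piola identity):
differentiating the cofactor determinants row by row turns each column divergence into a sum of
the second derivatives `∂ᵢ∂ₗΦₖ`, symmetric in `(i, l)`, against determinants antisymmetric
in `(i, l)`.
-/

/-- The divergence of a vector field `F : ℝ^M → ℝ^M` at a point. -/
noncomputable def vdiv (M : ℕ) (F : (Fin M → ℝ) → (Fin M → ℝ)) (y : Fin M → ℝ) : ℝ :=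
  ∑ i : Fin M, fderiv ℝ F y (Pi.single i 1) i

/-- The Jacobian matrix of a map `Φ : ℝ^M → ℝ^M` at a point. -/
noncomputable def jacMat (M : ℕ) (Φ : (Fin M → ℝ) → (Fin M → ℝ)) (y : Fin M → ℝ) :
    Matrix (Fin M) (Fin M) ℝ :=
  Matrix.of fun i j => fderiv ℝ Φ y (Pi.single j 1) i

namespace AlternatingMap

open Function

variable {R M N ι : Type*} [CommRing R] [AddCommGroup M] [Module R M] [AddCommGroup N] [Module R N]
  [DecidableEq ι] {j k : ι}

theorem map_update_update_swap (f : M [⋀^ι]→ₗ[R] N) (v : ι → M) (hjk : j ≠ k) (a b : M) :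
    f (update (update v j a) k b) = -f (update (update v j b) k a) := by
  rw [← f.map_swap _ hjk, Equiv.comp_swap_eq_update]
  simp [update_of_ne hjk, update_idem, update_comm hjk]

theorem sum_map_update_single_eq_zero_of_symm [IsAddTorsionFree N] {n : Type*} [Fintype n]
    [DecidableEq n] (f : (n → R) [⋀^ι]→ₗ[R] N) (v : ι → n → R) (hjk : j ≠ k) (w : n → n → R)
    (hw : ∀ i l, w i l = w l i) :
    ∑ i, f (update (update v j (Pi.single i 1)) k (w i)) = 0 := by
  set T : n → n → N := fun i l => f (update (update v j (Pi.single i 1)) k (Pi.single l 1))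
  have hexpand : ∀ i, f (update (update v j (Pi.single i 1)) k (w i)) = ∑ l, w i l • T i l := by
    intro i
    conv_lhs => rw [← Finset.univ_sum_single (w i)]
    simp only [f.map_update_sum, T, ← f.map_update_smul, ← Pi.single_smul, smul_eq_mul, mul_one]
  have hantisymm : ∑ i, ∑ l, w i l • T i l = -∑ i, ∑ l, w i l • T i l := by
    have hT : ∀ i l, T i l = -T l i := fun i l => f.map_update_update_swap _ hjk _ _
    conv_lhs => rw [Finset.sum_comm]
    rw [← Finset.sum_neg_distrib]
    refine Finset.sum_congr rfl fun l _ => ?_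
    rw [← Finset.sum_neg_distrib]
    refine Finset.sum_congr rfl fun i _ => ?_
    rw [hw i l, hT, smul_neg]
  simp only [hexpand]
  exact self_eq_neg.mp hantisymm

end AlternatingMap

namespace Matrix

theorem trace_adjugate_mul_mul_self {n R : Type*} [Fintype n] [DecidableEq n] [CommRing R]
    (A B : Matrix n n R) : (A.adjugate * (B * A)).trace = A.det * B.trace := by
  rw [← Matrix.mul_assoc, trace_mul_comm, ← Matrix.mul_assoc, mul_adjugate, smul_mul,
    Matrix.one_mul, trace_smul, smul_eq_mul]

variable {𝕜 E n : Type*} [NontriviallyNormedField 𝕜] [NormedAddCommGroup E] [NormedSpace 𝕜 E]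
  [DecidableEq n] {A : E → Matrix n n 𝕜} {x : E}

theorem differentiableAt_updateRow_rows (hA : ∀ k, DifferentiableAt 𝕜 (fun y => A y k) x)
    (j : n) (b : n → 𝕜) (k : n) : DifferentiableAt 𝕜 (fun y => (A y).updateRow j b k) x := by
  rcases eq_or_ne k j with rfl | hkj
  · simp
  · simpa [updateRow_ne hkj] using hA k

variable [Fintype n]

variable (𝕜 n) in
noncomputable def detRowContinuousMultilinear :
    ContinuousMultilinearMap 𝕜 (fun _ : n => n → 𝕜) 𝕜 :=
  ⟨(detRowAlternating : (n → 𝕜) [⋀^n]→ₗ[𝕜] 𝕜).toMultilinearMap, continuous_id.matrix_det⟩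

theorem hasFDerivAt_det_of_rows (hA : ∀ k, DifferentiableAt 𝕜 (fun y => A y k) x) :
    HasFDerivAt (fun y => (A y).det)
      (∑ k, (detRowContinuousMultilinear 𝕜 n).toContinuousLinearMap (A x) k ∘L
        fderiv 𝕜 (fun y => A y k) x) x :=
  HasFDerivAt.multilinear_comp (detRowContinuousMultilinear 𝕜 n) fun k => (hA k).hasFDerivAt

theorem fderiv_det_of_rows_apply (hA : ∀ k, DifferentiableAt 𝕜 (fun y => A y k) x) (v : E) :
    fderiv 𝕜 (fun y => (A y).det) x v =
      ∑ k, ((A x).updateRow k (fderiv 𝕜 (fun y => A y k) x v)).det := by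
  rw [(hasFDerivAt_det_of_rows hA).fderiv, _root_.sum_apply]
  rfl

theorem differentiableAt_adjugate_apply (hA : ∀ k, DifferentiableAt 𝕜 (fun y => A y k) x)
    (i j : n) : DifferentiableAt 𝕜 (fun y => (A y).adjugate i j) x := by
  simp only [adjugate_apply]
  exact (hasFDerivAt_det_of_rows (differentiableAt_updateRow_rows hA j _)).differentiableAt

theorem fderiv_adjugate_apply (hA : ∀ k, DifferentiableAt 𝕜 (fun y => A y k) x)
    (i j : n) (v : E) :
    fderiv 𝕜 (fun y => (A y).adjugate i j) x v =
      ∑ k ∈ Finset.univ.erase j,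
        (((A x).updateRow j (Pi.single i 1)).updateRow k (fderiv 𝕜 (fun y => A y k) x v)).det := by
  simp only [adjugate_apply]
  rw [fderiv_det_of_rows_apply (differentiableAt_updateRow_rows hA j _),
    ← Finset.add_sum_erase _ _ (Finset.mem_univ j)]
  have hrow_j : fderiv 𝕜 (fun y => (A y).updateRow j (Pi.single i 1) j) x = 0 := by
    simp only [updateRow_self, fderiv_const_apply]
  rw [hrow_j, det_eq_zero_of_row_eq_zero j (by simp), zero_add]
  refine Finset.sum_congr rfl fun k hk => ?_
  simp only [updateRow_ne (Finset.ne_of_mem_erase hk)]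

end Matrix

theorem fderiv_apply_coord {𝕜 E ι : Type*} [NontriviallyNormedField 𝕜] [NormedAddCommGroup E]
    [NormedSpace 𝕜 E] [Fintype ι] {G : E → ι → 𝕜} {y : E} (hG : DifferentiableAt 𝕜 G y)
    (v : E) (j : ι) : fderiv 𝕜 G y v j = fderiv 𝕜 (fun x => G x j) y v := by
  rw [fderiv_apply hG]
  rfl

open Filter Topology

section Jacobian

variable {M : ℕ}

theorem Filter.EventuallyEq.vdiv_eq {F G : (Fin M → ℝ) → (Fin M → ℝ)} {y : Fin M → ℝ}
    (h : F =ᶠ[𝓝 y] G) : vdiv M F y = vdiv M G y := by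
  simp only [vdiv, h.fderiv_eq]

theorem vdiv_eq_trace_jacMat (F : (Fin M → ℝ) → (Fin M → ℝ)) (y : Fin M → ℝ) :
    vdiv M F y = (jacMat M F y).trace := rfl

theorem jacMat_eq_toMatrix' (f : (Fin M → ℝ) → (Fin M → ℝ)) (x : Fin M → ℝ) :
    jacMat M f x = LinearMap.toMatrix' (fderiv ℝ f x : (Fin M → ℝ) →ₗ[ℝ] (Fin M → ℝ)) := by
  ext k l
  rfl

theorem jacMat_comp {f g : (Fin M → ℝ) → (Fin M → ℝ)} {x : Fin M → ℝ}
    (hf : DifferentiableAt ℝ f (g x)) (hg : DifferentiableAt ℝ g x) :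
    jacMat M (fun y => f (g y)) x = jacMat M f (g x) * jacMat M g x := by
  simp only [jacMat_eq_toMatrix', ← LinearMap.toMatrix'_comp]
  rw [fderiv_fun_comp x hf hg]
  rfl

theorem isUnit_det_jacMat_of_leftInverse {Φ Ψ : (Fin M → ℝ) → (Fin M → ℝ)} {x : Fin M → ℝ}
    (hΨ : DifferentiableAt ℝ Ψ (Φ x)) (hΦ : DifferentiableAt ℝ Φ x)
    (hinv : (fun y => Ψ (Φ y)) =ᶠ[𝓝 x] id) : IsUnit (jacMat M Φ x).det := by
  have hid : jacMat M (fun y => Ψ (Φ y)) x = 1 := by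
    rw [jacMat_eq_toMatrix', hinv.fderiv_eq, fderiv_id]
    exact LinearMap.toMatrix'_id
  rw [jacMat_comp hΨ hΦ] at hid
  exact Matrix.isUnit_det_of_left_inverse hid

theorem vdiv_mulVec {B : (Fin M → ℝ) → Matrix (Fin M) (Fin M) ℝ} {G : (Fin M → ℝ) → (Fin M → ℝ)}
    {y : Fin M → ℝ} (hB : ∀ i j, DifferentiableAt ℝ (fun x => B x i j) y)
    (hG : DifferentiableAt ℝ G y) :
    vdiv M (fun x => (B x).mulVec (G x)) y =
      ∑ j, (∑ i, fderiv ℝ (fun x => B x i j) y (Pi.single i 1)) * G y j +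
        (B y * jacMat M G y).trace := by
  have hGj : ∀ j, DifferentiableAt ℝ (fun x => G x j) y := differentiableAt_pi.1 hG
  have hterm : ∀ i j, DifferentiableAt ℝ (fun x => B x i j * G x j) y := fun i j =>
    (hB i j).mul (hGj j)
  have hBG : DifferentiableAt ℝ (fun x => (B x).mulVec (G x)) y :=
    differentiableAt_pi.2 fun i => DifferentiableAt.fun_sum (u := Finset.univ) fun j _ => hterm i j
  have hcoord : ∀ i, fderiv ℝ (fun x => (B x).mulVec (G x)) y (Pi.single i 1) i =
      ∑ j, (fderiv ℝ (fun x => B x i j) y (Pi.single i 1) * G y j +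
        B y i j * fderiv ℝ G y (Pi.single i 1) j) := by
    intro i
    rw [fderiv_apply_coord hBG]
    simp only [Matrix.mulVec, dotProduct, fderiv_apply_coord hG]
    rw [fderiv_fun_sum (u := Finset.univ) fun j _ => hterm i j, sum_apply]
    refine Finset.sum_congr rfl fun j _ => ?_
    rw [fderiv_fun_mul (hB i j) (hGj j)]
    simp only [add_apply, smul_apply, smul_eq_mul]
    ring
  simp only [vdiv, hcoord, Finset.sum_add_distrib, Matrix.trace, Matrix.diag, Matrix.mul_apply]
  congr 1
  rw [Finset.sum_comm]
  simp only [Finset.sum_mul]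

theorem hasFDerivAt_jacMat_row {Φ : (Fin M → ℝ) → (Fin M → ℝ)} {y : Fin M → ℝ}
    (h : DifferentiableAt ℝ (fderiv ℝ Φ) y) (k : Fin M) :
    HasFDerivAt (fun x => jacMat M Φ x k)
      ((ContinuousLinearMap.pi fun l => ContinuousLinearMap.proj k ∘L
          ContinuousLinearMap.apply ℝ (Fin M → ℝ) (Pi.single l 1)) ∘L
        fderiv ℝ (fderiv ℝ Φ) y) y := by
  exact (ContinuousLinearMap.pi fun l => ContinuousLinearMap.proj k ∘L
    ContinuousLinearMap.apply ℝ (Fin M → ℝ) (Pi.single l 1)).hasFDerivAt.comp y h.hasFDerivAt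

theorem differentiableAt_jacMat_row {Φ : (Fin M → ℝ) → (Fin M → ℝ)} {y : Fin M → ℝ}
    (h : DifferentiableAt ℝ (fderiv ℝ Φ) y) (k : Fin M) :
    DifferentiableAt ℝ (fun x => jacMat M Φ x k) y :=
  (hasFDerivAt_jacMat_row h k).differentiableAt

theorem fderiv_jacMat_row_apply {Φ : (Fin M → ℝ) → (Fin M → ℝ)} {y : Fin M → ℝ}
    (h : DifferentiableAt ℝ (fderiv ℝ Φ) y) (k : Fin M) (v : Fin M → ℝ) (l : Fin M) :
    fderiv ℝ (fun x => jacMat M Φ x k) y v l = fderiv ℝ (fderiv ℝ Φ) y v (Pi.single l 1) k := by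
  rw [(hasFDerivAt_jacMat_row h k).fderiv]
  rfl

theorem sum_fderiv_adjugate_jacMat_eq_zero {Φ : (Fin M → ℝ) → (Fin M → ℝ)} {y : Fin M → ℝ}
    (hΦ : ContDiffAt ℝ 2 Φ y) (j : Fin M) :
    ∑ i, fderiv ℝ (fun x => (jacMat M Φ x).adjugate i j) y (Pi.single i 1) = 0 := by
  have hd : DifferentiableAt ℝ (fderiv ℝ Φ) y :=
    (hΦ.fderiv_right (m := 1) (by norm_num)).differentiableAt one_ne_zero
  have hsymm := hΦ.isSymmSndFDerivAt (by simp [minSmoothness_of_isRCLikeNormedField])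
  simp only [Matrix.fderiv_adjugate_apply (differentiableAt_jacMat_row hd)]
  rw [Finset.sum_comm]
  refine Finset.sum_eq_zero fun k hk => ?_
  refine AlternatingMap.sum_map_update_single_eq_zero_of_symm Matrix.detRowAlternating
    (jacMat M Φ y) (Finset.ne_of_mem_erase hk).symm _ fun i l => ?_
  rw [fderiv_jacMat_row_apply hd, fderiv_jacMat_row_apply hd, hsymm]

end Jacobian

theorem stmt_2_general (N : ℕ)
    (Uhat U : Set (Fin (N + 1) → ℝ)) (hUhat : IsOpen Uhat) (hU : IsOpen U)
    (Φ : (Fin (N + 1) → ℝ) → (Fin (N + 1) → ℝ))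
    (Ψ : (Fin (N + 1) → ℝ) → (Fin (N + 1) → ℝ))
    (hΦ : ContDiffOn ℝ 2 Φ Uhat) (hΨ : ContDiffOn ℝ 2 Ψ U)
    (hmaps : Set.MapsTo Φ Uhat U)
    (hinv : ∀ y ∈ Uhat, Ψ (Φ y) = y)
    (F : (Fin (N + 1) → ℝ) → (Fin (N + 1) → ℝ))
    (hF : ContDiffOn ℝ 1 F U)
    (Fhat : (Fin (N + 1) → ℝ) → (Fin (N + 1) → ℝ))
    (hFhat : ∀ y, Fhat y =
      (jacMat (N + 1) Φ y).det • (jacMat (N + 1) Φ y)⁻¹.mulVec (F (Φ y))) :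
    ∀ y ∈ Uhat,
      vdiv (N + 1) Fhat y = (jacMat (N + 1) Φ y).det * vdiv (N + 1) F (Φ y) := by
  intro y hy
  have hΦy : ContDiffAt ℝ 2 Φ y := hΦ.contDiffAt (hUhat.mem_nhds hy)
  have hΦd : DifferentiableAt ℝ Φ y := hΦy.differentiableAt (by norm_num)
  have hFd : DifferentiableAt ℝ F (Φ y) :=
    (hF.contDiffAt (hU.mem_nhds (hmaps hy))).differentiableAt one_ne_zero
  have hadjugate : ∀ i j, DifferentiableAt ℝ (fun x => (jacMat (N + 1) Φ x).adjugate i j) y :=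
    Matrix.differentiableAt_adjugate_apply <| differentiableAt_jacMat_row <|
      (hΦy.fderiv_right (m := 1) (by norm_num)).differentiableAt one_ne_zero
  have hlocal : Fhat =ᶠ[𝓝 y] fun x => (jacMat (N + 1) Φ x).adjugate.mulVec (F (Φ x)) := by
    filter_upwards [hUhat.mem_nhds hy] with x hx
    have hunit : IsUnit (jacMat (N + 1) Φ x).det :=
      isUnit_det_jacMat_of_leftInverse
        ((hΨ.contDiffAt (hU.mem_nhds (hmaps hx))).differentiableAt (by norm_num))
        ((hΦ.contDiffAt (hUhat.mem_nhds hx)).differentiableAt (by norm_num))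
        (eventually_of_mem (hUhat.mem_nhds hx) hinv)
    rw [hFhat, Matrix.inv_def, Matrix.smul_mulVec, smul_smul, Ring.mul_inverse_cancel _ hunit,
      one_smul]
  rw [hlocal.vdiv_eq, vdiv_mulVec (G := fun x => F (Φ x)) hadjugate (hFd.comp y hΦd),
    jacMat_comp hFd hΦd, Matrix.trace_adjugate_mul_mul_self, vdiv_eq_trace_jacMat]
  simp only [sum_fderiv_adjugate_jacMat_eq_zero hΦy, zero_mul, Finset.sum_const_zero, zero_add]

/-- Piola transform divergence identity.  For a `C²` diffeomorphism
`Φ : Û → U` of open subsets of `ℝ^{N+1}` and a `C¹` field `F : U → ℝ^{N+1}`,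
the Piola pullback `F̂ = det(DΦ) (DΦ)⁻¹ (F ∘ Φ)` satisfies
`div F̂ = det(DΦ) · ((div F) ∘ Φ)` on `Û`. -/
theorem stmt_2 (N : ℕ) (hN : 1 ≤ N)
    (Uhat U : Set (Fin (N + 1) → ℝ)) (hUhat : IsOpen Uhat) (hU : IsOpen U)
    (Φ : (Fin (N + 1) → ℝ) → (Fin (N + 1) → ℝ))
    (Ψ : (Fin (N + 1) → ℝ) → (Fin (N + 1) → ℝ))
    (hΦ : ContDiffOn ℝ 2 Φ Uhat) (hΨ : ContDiffOn ℝ 2 Ψ U)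
    (hmaps : Set.MapsTo Φ Uhat U) (hmaps' : Set.MapsTo Ψ U Uhat)
    (hinv : ∀ y ∈ Uhat, Ψ (Φ y) = y) (hinv' : ∀ z ∈ U, Φ (Ψ z) = z)
    (F : (Fin (N + 1) → ℝ) → (Fin (N + 1) → ℝ))
    (hF : ContDiffOn ℝ 1 F U)
    (Fhat : (Fin (N + 1) → ℝ) → (Fin (N + 1) → ℝ))
    (hFhat : ∀ y, Fhat y =
      (jacMat (N + 1) Φ y).det • (jacMat (N + 1) Φ y)⁻¹.mulVec (F (Φ y))) :
    ∀ y ∈ Uhat,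
      vdiv (N + 1) Fhat y = (jacMat (N + 1) Φ y).det * vdiv (N + 1) F (Φ y) :=
  stmt_2_general N Uhat U hUhat hU Φ Ψ hΦ hΨ hmaps hinv F hF Fhat hFhat
end

section
/- Let Φ(x̂, t̂) = (x̂, φ(x̂, t̂)) be the tent map with φ(x̂, t̂) = (1−t̂)τ₀(x̂) + t̂τ₁(x̂), δ = τ₁ − τ₀ > 0. For a smooth scalar function u on the tent K satisfying ∂ₜ g(u) + div_x f(u) = 0, the mapped function û = u ∘ Φ satisfies ∂_{t̂} (g(û) − f(û)·∇φ) + div_{x̂}(δ f(û)) = 0 on the cylinder, where ∇φ is the spatial gradient of φ. -/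
/-- Partial derivative in the time variable of `h : ℝ^N × ℝ → ℝ` at `p`. -/
noncomputable def Pt (N : ℕ) (h : (Fin N → ℝ) × ℝ → ℝ) (p : (Fin N → ℝ) × ℝ) : ℝ :=
  deriv (fun s => h (p.1, s)) p.2

/-- Partial derivative in the `j`-th spatial variable of `h : ℝ^N × ℝ → ℝ` at `p`. -/
noncomputable def Px (N : ℕ) (j : Fin N) (h : (Fin N → ℝ) × ℝ → ℝ)
    (p : (Fin N → ℝ) × ℝ) : ℝ :=
  deriv (fun y => h (Function.update p.1 j y, p.2)) (p.1 j)

lemma hasDerivAt_update' {N : ℕ} (x : Fin N → ℝ) (j : Fin N) (y₀ : ℝ) :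
    HasDerivAt (fun y => Function.update x j y) (Pi.single j 1) y₀ := by
  have h : (fun y : ℝ => Function.update x j y)
      = fun y => x + (y - x j) • (Pi.single j 1 : Fin N → ℝ) := by
    funext y i
    rcases eq_or_ne i j with rfl | hij
    · simp
    · simp [Function.update_of_ne hij, Pi.single_apply, hij]
  rw [h]
  simpa using (((hasDerivAt_id y₀).sub_const (x j)).smul_const
    (Pi.single j 1 : Fin N → ℝ)).const_add x

lemma diff_coord {N : ℕ} {f : ℝ → Fin N → ℝ} (hf : ContDiff ℝ (⊤ : ℕ∞) f) (j : Fin N) :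
    Differentiable ℝ (fun s => f s j) :=
  differentiable_pi.mp (hf.differentiable (by simp)) j

set_option maxHeartbeats 2000000 in
/-- mapping a scalar conservation law `∂ₜ g(u) + div_x f(u) = 0`
from the tent `K = {(x,t) : x ∈ Ω, τ₀(x) < t < τ₁(x)}` to the cylinder
`Ω × (0,1)` via the tent map `Φ(x̂,t̂) = (x̂, (1-t̂)τ₀ + t̂τ₁)` yields
`∂_t̂(g(û) - f(û)·∇φ) + div_x̂(δ f(û)) = 0`, where `û = u ∘ Φ` and `δ = τ₁ - τ₀`. -/
theorem stmt_3 (N : ℕ) (hN : 1 ≤ N)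
    (Ω : Set (Fin N → ℝ)) (hΩ : IsOpen Ω)
    (τ₀ τ₁ : (Fin N → ℝ) → ℝ)
    (hτ₀ : ContDiff ℝ (⊤ : ℕ∞) τ₀) (hτ₁ : ContDiff ℝ (⊤ : ℕ∞) τ₁)
    (hlt : ∀ x ∈ Ω, τ₀ x < τ₁ x)
    (g : ℝ → ℝ) (f : ℝ → Fin N → ℝ)
    (hg : ContDiff ℝ (⊤ : ℕ∞) g) (hf : ContDiff ℝ (⊤ : ℕ∞) f)
    (u : (Fin N → ℝ) × ℝ → ℝ) (hu : ContDiff ℝ (⊤ : ℕ∞) u)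
    -- the conservation law holds on the tent K
    (hK : ∀ p : (Fin N → ℝ) × ℝ, p.1 ∈ Ω → p.2 ∈ Set.Ioo (τ₀ p.1) (τ₁ p.1) →
      Pt N (fun q => g (u q)) p + ∑ j, Px N j (fun q => f (u q) j) p = 0)
    (Φ : ((Fin N → ℝ) × ℝ) → ((Fin N → ℝ) × ℝ))
    (hΦ : ∀ p : (Fin N → ℝ) × ℝ,
      Φ p = (p.1, (1 - p.2) * τ₀ p.1 + p.2 * τ₁ p.1)) :
    -- the mapped equation holds on the cylinder Ω × (0,1)
    ∀ ph : (Fin N → ℝ) × ℝ, ph.1 ∈ Ω → ph.2 ∈ Set.Ioo (0:ℝ) 1 →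
      Pt N (fun q => g (u (Φ q))
              - ∑ j, f (u (Φ q)) j
                  * ((1 - q.2) * Px N j (fun r => τ₀ r.1) q
                     + q.2 * Px N j (fun r => τ₁ r.1) q)) ph
      + ∑ j, Px N j (fun q => (τ₁ q.1 - τ₀ q.1) * f (u (Φ q)) j) ph = 0 := by
  intro ph hx ht
  obtain ⟨x, t⟩ := ph
  simp only at hx ht
  obtain ⟨ht0, ht1⟩ := ht
  have hδ : 0 < τ₁ x - τ₀ x := sub_pos.mpr (hlt x hx)
  -- notation
  set P : (Fin N → ℝ) × ℝ := (x, (1 - t) * τ₀ x + t * τ₁ x) with hPdef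
  set D : ((Fin N → ℝ) × ℝ) →L[ℝ] ℝ := fderiv ℝ u P with hDdef
  set T₀ : (Fin N → ℝ) →L[ℝ] ℝ := fderiv ℝ τ₀ x with hT₀def
  set T₁ : (Fin N → ℝ) →L[ℝ] ℝ := fderiv ℝ τ₁ x with hT₁def
  set U : ℝ := u P with hUdef
  have hu' : HasFDerivAt u D P := (hu.differentiable (by simp) P).hasFDerivAt
  have hT₀' : HasFDerivAt τ₀ T₀ x := (hτ₀.differentiable (by simp) x).hasFDerivAt
  have hT₁' : HasFDerivAt τ₁ T₁ x := (hτ₁.differentiable (by simp) x).hasFDerivAt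
  have hg' : HasDerivAt g (deriv g U) U := ((hg.differentiable (by simp)) U).hasDerivAt
  have hf' : ∀ j, HasDerivAt (fun s => f s j) (deriv (fun s => f s j) U) U :=
    fun j => (diff_coord hf j U).hasDerivAt
  -- linearity facts about D
  have hD0 : ∀ r : ℝ, D ((0 : Fin N → ℝ), r) = r * D (0, 1) := by
    intro r
    have h : ((0 : Fin N → ℝ), r) = r • ((0 : Fin N → ℝ), (1:ℝ)) := by
      simp [Prod.smul_def]
    rw [h, map_smul, smul_eq_mul]
  have hDlin : ∀ (v : Fin N → ℝ) (r : ℝ), D (v, r) = D (v, 0) + r * D (0, 1) := by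
    intro v r
    have h : (v, r) = ((v, (0:ℝ)) + ((0 : Fin N → ℝ), r)) := by simp
    rw [h, map_add, hD0]
  -- inner spatial derivatives of τ₀, τ₁ are constant in time
  have hPxτ₀ : ∀ (j : Fin N) (s : ℝ),
      Px N j (fun r : (Fin N → ℝ) × ℝ => τ₀ r.1) (x, s) = T₀ (Pi.single j 1) := by
    intro j s
    have h : HasDerivAt (fun y => τ₀ (Function.update x j y)) (T₀ (Pi.single j 1)) (x j) :=
      HasFDerivAt.comp_hasDerivAt (x j)
        (by rw [Function.update_eq_self]; exact hT₀') (hasDerivAt_update' x j (x j))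
    exact h.deriv
  have hPxτ₁ : ∀ (j : Fin N) (s : ℝ),
      Px N j (fun r : (Fin N → ℝ) × ℝ => τ₁ r.1) (x, s) = T₁ (Pi.single j 1) := by
    intro j s
    have h : HasDerivAt (fun y => τ₁ (Function.update x j y)) (T₁ (Pi.single j 1)) (x j) :=
      HasFDerivAt.comp_hasDerivAt (x j)
        (by rw [Function.update_eq_self]; exact hT₁') (hasDerivAt_update' x j (x j))
    exact h.deriv

  -- time-direction derivative of the mapped time
  have hφt : HasDerivAt (fun s : ℝ => (1 - s) * τ₀ x + s * τ₁ x) (τ₁ x - τ₀ x) t := by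
    have h1 : HasDerivAt (fun s : ℝ => (1 - s) * τ₀ x) (-(τ₀ x)) t := by
      simpa using ((hasDerivAt_const t (1:ℝ)).sub (hasDerivAt_id t)).mul_const (τ₀ x)
    have h2 : HasDerivAt (fun s : ℝ => s * τ₁ x) (τ₁ x) t := by
      simpa using (hasDerivAt_id t).mul_const (τ₁ x)
    simpa [neg_add_eq_sub] using h1.fun_add h2
  have hw : HasDerivAt (fun s : ℝ => u (x, (1 - s) * τ₀ x + s * τ₁ x))
      ((τ₁ x - τ₀ x) * D (0, 1)) t := by
    have hcv : HasDerivAt (fun s : ℝ => ((x : Fin N → ℝ), (1 - s) * τ₀ x + s * τ₁ x))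
        (((0 : Fin N → ℝ), τ₁ x - τ₀ x)) t := (hasDerivAt_const t x).prodMk hφt
    have h := hu'.comp_hasDerivAt t hcv
    exact (hD0 (τ₁ x - τ₀ x)) ▸ h
  -- the time-derivative term of the goal
  have hderiv1 : HasDerivAt (fun s : ℝ => g (u (x, (1 - s) * τ₀ x + s * τ₁ x))
          - ∑ j, f (u (x, (1 - s) * τ₀ x + s * τ₁ x)) j
              * ((1 - s) * T₀ (Pi.single j 1) + s * T₁ (Pi.single j 1)))
      (deriv g U * ((τ₁ x - τ₀ x) * D (0, 1))
        - ∑ j, (deriv (fun s => f s j) U * ((τ₁ x - τ₀ x) * D (0, 1))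
                  * ((1 - t) * T₀ (Pi.single j 1) + t * T₁ (Pi.single j 1))
                + f U j * (T₁ (Pi.single j 1) - T₀ (Pi.single j 1)))) t := by
    refine HasDerivAt.sub (hg'.comp t hw) (HasDerivAt.fun_sum fun j _ => ?_)
    have hfj : HasDerivAt (fun s : ℝ => f (u (x, (1 - s) * τ₀ x + s * τ₁ x)) j)
        (deriv (fun s => f s j) U * ((τ₁ x - τ₀ x) * D (0, 1))) t := by
      have := (hf' j).comp t hw; exact this
    have hlin : HasDerivAt (fun s : ℝ => (1 - s) * T₀ (Pi.single j 1) + s * T₁ (Pi.single j 1))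
        (T₁ (Pi.single j 1) - T₀ (Pi.single j 1)) t := by
      have h1 : HasDerivAt (fun s : ℝ => (1 - s) * T₀ (Pi.single j 1)) (-(T₀ (Pi.single j 1))) t := by
        simpa using ((hasDerivAt_const t (1:ℝ)).sub (hasDerivAt_id t)).mul_const (T₀ (Pi.single j 1))
      have h2 : HasDerivAt (fun s : ℝ => s * T₁ (Pi.single j 1)) (T₁ (Pi.single j 1)) t := by
        simpa using (hasDerivAt_id t).mul_const (T₁ (Pi.single j 1))
      simpa [neg_add_eq_sub] using h1.fun_add h2
    exact hfj.mul hlin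
  have hPtEq : Pt N (fun q => g (u (Φ q))
              - ∑ j, f (u (Φ q)) j
                  * ((1 - q.2) * Px N j (fun r => τ₀ r.1) q
                     + q.2 * Px N j (fun r => τ₁ r.1) q)) (x, t)
      = deriv g U * ((τ₁ x - τ₀ x) * D (0, 1))
        - ∑ j, (deriv (fun s => f s j) U * ((τ₁ x - τ₀ x) * D (0, 1))
                  * ((1 - t) * T₀ (Pi.single j 1) + t * T₁ (Pi.single j 1))
                + f U j * (T₁ (Pi.single j 1) - T₀ (Pi.single j 1))) := by
    calc Pt N (fun q => g (u (Φ q))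
              - ∑ j, f (u (Φ q)) j
                  * ((1 - q.2) * Px N j (fun r => τ₀ r.1) q
                     + q.2 * Px N j (fun r => τ₁ r.1) q)) (x, t)
        = deriv (fun s : ℝ => g (u (x, (1 - s) * τ₀ x + s * τ₁ x))
          - ∑ j, f (u (x, (1 - s) * τ₀ x + s * τ₁ x)) j
              * ((1 - s) * T₀ (Pi.single j 1) + s * T₁ (Pi.single j 1))) t := by
          simp only [Pt, hΦ, hPxτ₀, hPxτ₁]
      _ = _ := hderiv1.deriv
  -- the spatial-derivative terms of the goal
  have hPxEq : ∀ j : Fin N, Px N j (fun q => (τ₁ q.1 - τ₀ q.1) * f (u (Φ q)) j) (x, t)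
      = (T₁ (Pi.single j 1) - T₀ (Pi.single j 1)) * f U j
        + (τ₁ x - τ₀ x) * (deriv (fun s => f s j) U
            * (D (Pi.single j 1, 0)
               + ((1 - t) * T₀ (Pi.single j 1) + t * T₁ (Pi.single j 1)) * D (0, 1))) := by
    intro j
    have hx0 : Function.update x j (x j) = x := Function.update_eq_self j x
    have hupd := hasDerivAt_update' x j (x j)
    have hτ₀c : HasDerivAt (fun y => τ₀ (Function.update x j y)) (T₀ (Pi.single j 1)) (x j) :=
      HasFDerivAt.comp_hasDerivAt (x j) (by rw [hx0]; exact hT₀') hupd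
    have hτ₁c : HasDerivAt (fun y => τ₁ (Function.update x j y)) (T₁ (Pi.single j 1)) (x j) :=
      HasFDerivAt.comp_hasDerivAt (x j) (by rw [hx0]; exact hT₁') hupd
    have hφc : HasDerivAt
        (fun y => (1 - t) * τ₀ (Function.update x j y) + t * τ₁ (Function.update x j y))
        ((1 - t) * T₀ (Pi.single j 1) + t * T₁ (Pi.single j 1)) (x j) :=
      (hτ₀c.const_mul (1 - t)).add (hτ₁c.const_mul t)
    have hcurve : HasDerivAt (fun y => ((Function.update x j y : Fin N → ℝ),
        (1 - t) * τ₀ (Function.update x j y) + t * τ₁ (Function.update x j y)))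
        (((Pi.single j 1 : Fin N → ℝ),
          (1 - t) * T₀ (Pi.single j 1) + t * T₁ (Pi.single j 1))) (x j) := hupd.prodMk hφc
    have hu'' : HasFDerivAt u D ((Function.update x j (x j) : Fin N → ℝ),
        (1 - t) * τ₀ (Function.update x j (x j)) + t * τ₁ (Function.update x j (x j))) := by
      rw [hx0]; exact hu'
    have huc : HasDerivAt (fun y => u ((Function.update x j y : Fin N → ℝ),
        (1 - t) * τ₀ (Function.update x j y) + t * τ₁ (Function.update x j y)))
        (D (Pi.single j 1, 0)
          + ((1 - t) * T₀ (Pi.single j 1) + t * T₁ (Pi.single j 1)) * D (0, 1)) (x j) := by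
      have h := hu''.comp_hasDerivAt (x j) hcurve
      exact (hDlin (Pi.single j 1)
        ((1 - t) * T₀ (Pi.single j 1) + t * T₁ (Pi.single j 1))) ▸ h
    have hfc : HasDerivAt (fun s => f s j) (deriv (fun s => f s j) U)
        (u ((Function.update x j (x j) : Fin N → ℝ),
          (1 - t) * τ₀ (Function.update x j (x j)) + t * τ₁ (Function.update x j (x j)))) := by
      rw [hx0]; exact hf' j
    have hfuc := hfc.comp (x j) huc
    have hδc : HasDerivAt (fun y => τ₁ (Function.update x j y) - τ₀ (Function.update x j y))
        (T₁ (Pi.single j 1) - T₀ (Pi.single j 1)) (x j) := hτ₁c.sub hτ₀c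
    have hprod : HasDerivAt (fun y => (τ₁ (Function.update x j y) - τ₀ (Function.update x j y))
        * f (u ((Function.update x j y : Fin N → ℝ),
            (1 - t) * τ₀ (Function.update x j y) + t * τ₁ (Function.update x j y))) j)
        ((T₁ (Pi.single j 1) - T₀ (Pi.single j 1)) * f U j
          + (τ₁ x - τ₀ x) * (deriv (fun s => f s j) U
              * (D (Pi.single j 1, 0)
                 + ((1 - t) * T₀ (Pi.single j 1) + t * T₁ (Pi.single j 1)) * D (0, 1)))) (x j) := by
      have h := hδc.mul hfuc
      have hval : (τ₁ (Function.update x j (x j)) - τ₀ (Function.update x j (x j)))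
            * (deriv (fun s => f s j) U
              * (D (Pi.single j 1, 0)
                 + ((1 - t) * T₀ (Pi.single j 1) + t * T₁ (Pi.single j 1)) * D (0, 1)))
          = (τ₁ x - τ₀ x) * (deriv (fun s => f s j) U
              * (D (Pi.single j 1, 0)
                 + ((1 - t) * T₀ (Pi.single j 1) + t * T₁ (Pi.single j 1)) * D (0, 1))) := by
        rw [hx0]
      have hval2 : f (u ((Function.update x j (x j) : Fin N → ℝ),
            (1 - t) * τ₀ (Function.update x j (x j)) + t * τ₁ (Function.update x j (x j)))) j
          = f U j := by rw [hx0]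
      rw [← hval, ← hval2]
      exact h
    calc Px N j (fun q => (τ₁ q.1 - τ₀ q.1) * f (u (Φ q)) j) (x, t)
        = deriv (fun y => (τ₁ (Function.update x j y) - τ₀ (Function.update x j y))
            * f (u ((Function.update x j y : Fin N → ℝ),
                (1 - t) * τ₀ (Function.update x j y) + t * τ₁ (Function.update x j y))) j) (x j) := by
          simp only [Px, hΦ]
      _ = _ := hprod.deriv
  -- the conservation law at the mapped point
  have hIoo : (1 - t) * τ₀ x + t * τ₁ x ∈ Set.Ioo (τ₀ x) (τ₁ x) := by
    constructor
    · nlinarith [mul_pos ht0 hδ]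
    · nlinarith [mul_pos (sub_pos.mpr ht1) hδ]
  have hcons := hK P hx hIoo
  have hwP : HasDerivAt (fun s : ℝ => u (x, s)) (D (0, 1)) P.2 :=
    hu'.comp_hasDerivAt P.2 ((hasDerivAt_const P.2 x).prodMk (hasDerivAt_id P.2))
  have hPtP : Pt N (fun q => g (u q)) P = deriv g U * D (0, 1) := (hg'.comp P.2 hwP).deriv
  have hPxP : ∀ j, Px N j (fun q => f (u q) j) P
      = deriv (fun s => f s j) U * D (Pi.single j 1, 0) := by
    intro j
    have hx0 : Function.update x j (x j) = x := Function.update_eq_self j x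
    have hcv : HasDerivAt (fun y => ((Function.update x j y : Fin N → ℝ), P.2))
        (((Pi.single j 1 : Fin N → ℝ), (0:ℝ))) (x j) :=
      (hasDerivAt_update' x j (x j)).prodMk (hasDerivAt_const (x j) P.2)
    have hu'' : HasFDerivAt u D ((Function.update x j (x j) : Fin N → ℝ), P.2) := by
      rw [hx0]; exact hu'
    have huy := hu''.comp_hasDerivAt (x j) hcv
    have hfc : HasDerivAt (fun s => f s j) (deriv (fun s => f s j) U)
        (u ((Function.update x j (x j) : Fin N → ℝ), P.2)) := by
      rw [hx0]; exact hf' j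
    exact (hfc.comp (x j) huy).deriv
  have key : deriv g U * D (0, 1)
      + ∑ j, deriv (fun s => f s j) U * D (Pi.single j 1, 0) = 0 := by
    rw [hPtP] at hcons
    rw [Finset.sum_congr rfl (fun j _ => hPxP j)] at hcons
    exact hcons
  -- assemble
  rw [hPtEq, Finset.sum_congr rfl (fun j _ => hPxEq j)]
  have expand : ∑ j, ((T₁ (Pi.single j 1) - T₀ (Pi.single j 1)) * f U j
        + (τ₁ x - τ₀ x) * (deriv (fun s => f s j) U
            * (D (Pi.single j 1, 0)
               + ((1 - t) * T₀ (Pi.single j 1) + t * T₁ (Pi.single j 1)) * D (0, 1))))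
      = ∑ j, ((deriv (fun s => f s j) U * ((τ₁ x - τ₀ x) * D (0, 1))
                  * ((1 - t) * T₀ (Pi.single j 1) + t * T₁ (Pi.single j 1))
                + f U j * (T₁ (Pi.single j 1) - T₀ (Pi.single j 1)))
              + (τ₁ x - τ₀ x) * (deriv (fun s => f s j) U * D (Pi.single j 1, 0))) :=
    Finset.sum_congr rfl fun j _ => by ring
  rw [expand]
  simp only [Finset.sum_add_distrib]
  rw [← Finset.mul_sum]
  linear_combination (τ₁ x - τ₀ x) * key
end

section
/- Conversely, if û : Ω × (0,1) → ℝ is smooth and satisfies ∂_{t̂} (g(û) − f(û)·∇φ) + div_{x̂}(δ f(û)) = 0, then u = û ∘ Φ⁻¹ is well defined on the tent K and satisfies ∂ₜ g(u) + div_x f(u) = 0 on K. -/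
/-- conversely, if `û` is smooth on the cylinder `Ω × (0,1)` and
satisfies the mapped equation `∂_t̂(g(û) - f(û)·∇φ) + div_x̂(δ f(û)) = 0`, then
`u = û ∘ Φ⁻¹`, with `Φ⁻¹(x,t) = (x, (t - τ₀(x))/(τ₁(x) - τ₀(x)))`, is well
defined on the tent `K` and satisfies `∂ₜ g(u) + div_x f(u) = 0` on `K`. -/
theorem stmt_4 (N : ℕ) (hN : 1 ≤ N)
    (Ω : Set (Fin N → ℝ)) (hΩ : IsOpen Ω)
    (τ₀ τ₁ : (Fin N → ℝ) → ℝ)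
    (hτ₀ : ContDiff ℝ (⊤ : ℕ∞) τ₀) (hτ₁ : ContDiff ℝ (⊤ : ℕ∞) τ₁)
    (hlt : ∀ x ∈ Ω, τ₀ x < τ₁ x)
    (g : ℝ → ℝ) (f : ℝ → Fin N → ℝ)
    (hg : ContDiff ℝ (⊤ : ℕ∞) g) (hf : ContDiff ℝ (⊤ : ℕ∞) f)
    (uhat : (Fin N → ℝ) × ℝ → ℝ) (huhat : ContDiff ℝ (⊤ : ℕ∞) uhat)
    (Φ : ((Fin N → ℝ) × ℝ) → ((Fin N → ℝ) × ℝ))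
    (hΦ : ∀ p : (Fin N → ℝ) × ℝ,
      Φ p = (p.1, (1 - p.2) * τ₀ p.1 + p.2 * τ₁ p.1))
    -- the mapped equation holds on the cylinder Ω × (0,1)
    (hcyl : ∀ ph : (Fin N → ℝ) × ℝ, ph.1 ∈ Ω → ph.2 ∈ Set.Ioo (0:ℝ) 1 →
      Pt N (fun q => g (uhat q)
              - ∑ j, f (uhat q) j
                  * ((1 - q.2) * Px N j (fun r => τ₀ r.1) q
                     + q.2 * Px N j (fun r => τ₁ r.1) q)) ph
      + ∑ j, Px N j (fun q => (τ₁ q.1 - τ₀ q.1) * f (uhat q) j) ph = 0)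
    (u : (Fin N → ℝ) × ℝ → ℝ)
    (hu : ∀ p : (Fin N → ℝ) × ℝ,
      u p = uhat (p.1, (p.2 - τ₀ p.1) / (τ₁ p.1 - τ₀ p.1))) :
    -- then u inverts the tent map and satisfies the conservation law on the tent K
    (∀ ph : (Fin N → ℝ) × ℝ, ph.1 ∈ Ω → ph.2 ∈ Set.Ioo (0:ℝ) 1 →
        u (Φ ph) = uhat ph) ∧
    ∀ p : (Fin N → ℝ) × ℝ, p.1 ∈ Ω → p.2 ∈ Set.Ioo (τ₀ p.1) (τ₁ p.1) →
      Pt N (fun q => g (u q)) p + ∑ j, Px N j (fun q => f (u q) j) p = 0 := by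
  constructor
  · intro ph hxΩ _
    have hδ : τ₁ ph.1 - τ₀ ph.1 ≠ 0 := sub_ne_zero.2 (hlt _ hxΩ).ne'
    have h2 : ((1 - ph.2) * τ₀ ph.1 + ph.2 * τ₁ ph.1 - τ₀ ph.1) / (τ₁ ph.1 - τ₀ ph.1) = ph.2 := by
      field_simp; ring
    rw [hu, hΦ]
    simp only [h2]
  · intro p hxp htp
    obtain ⟨x, t⟩ := p
    replace hxp : x ∈ Ω := hxp
    replace htp : t ∈ Set.Ioo (τ₀ x) (τ₁ x) := htp
    set δx := τ₁ x - τ₀ x with hδxd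
    have hδpos : 0 < δx := sub_pos.2 (hlt x hxp)
    have hδ : δx ≠ 0 := ne_of_gt hδpos
    set s := (t - τ₀ x) / δx with hsd
    have hs0 : 0 < s := div_pos (sub_pos.2 htp.1) hδpos
    have hs1 : s < 1 := (div_lt_one hδpos).2 (by rw [hδxd]; linarith [htp.2])
    set D := fderiv ℝ uhat (x, s) with hDd
    have hD : HasFDerivAt uhat D (x, s) := (huhat.differentiable (by simp) (x, s)).hasFDerivAt
    set A := deriv g (uhat (x, s)) with hAd
    set B : Fin N → ℝ := fun j => deriv (fun z => f z j) (uhat (x, s)) with hBd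
    set T0 : Fin N → ℝ := fun j => deriv (fun y => τ₀ (Function.update x j y)) (x j) with hT0d
    set T1 : Fin N → ℝ := fun j => deriv (fun y => τ₁ (Function.update x j y)) (x j) with hT1d
    set W : Fin N → ℝ := fun j =>
      ((0 - T0 j) * δx - (t - τ₀ x) * (T1 j - T0 j)) / δx ^ 2 with hWd
    have hgd : HasDerivAt g A (uhat (x, s)) := (hg.differentiable (by simp) _).hasDerivAt
    have hfd : ∀ j, HasDerivAt (fun z => f z j) (B j) (uhat (x, s)) := fun j =>
      (differentiableAt_pi.mp (hf.differentiable (by simp) _) j).hasDerivAt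
    have hT0 : ∀ j, HasDerivAt (fun y => τ₀ (Function.update x j y)) (T0 j) (x j) := fun j =>
      (((hτ₀.differentiable (by simp)) _).comp _
        (hasDerivAt_update x j (x j)).differentiableAt).hasDerivAt
    have hT1 : ∀ j, HasDerivAt (fun y => τ₁ (Function.update x j y)) (T1 j) (x j) := fun j =>
      (((hτ₁.differentiable (by simp)) _).comp _
        (hasDerivAt_update x j (x j)).differentiableAt).hasDerivAt
    -- linearity helpers
    have hDt : D ((0 : Fin N → ℝ), 1 / δx) = (1 / δx) * D (0, 1) := by
      have h1 : ((0 : Fin N → ℝ), 1 / δx) = (1 / δx) • ((0 : Fin N → ℝ), (1 : ℝ)) := by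
        simp [Prod.ext_iff]
      rw [h1, map_smul, smul_eq_mul]
    have hDx : ∀ j : Fin N, D (Pi.single j 1, W j) = D (Pi.single j 1, 0) + W j * D (0, 1) := by
      intro j
      have h1 : ((Pi.single j 1 : Fin N → ℝ), W j)
          = ((Pi.single j 1 : Fin N → ℝ), (0 : ℝ)) + (W j) • ((0 : Fin N → ℝ), (1 : ℝ)) := by
        simp [Prod.ext_iff]
      rw [h1, map_add, map_smul, smul_eq_mul]
    -- LHS time derivative
    have hL1 : Pt N (fun q => g (u q)) (x, t) = A * D ((0 : Fin N → ℝ), 1 / δx) := by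
      simp only [hu, Pt]
      exact (hgd.comp t (hD.comp_hasDerivAt t ((hasDerivAt_const t x).prodMk
        (((hasDerivAt_id t).sub_const (τ₀ x)).div_const δx)))).deriv
    -- LHS space derivatives
    have hL2 : ∀ j, Px N j (fun q => f (u q) j) (x, t) = B j * D (Pi.single j 1, W j) := by
      intro j
      have hq := ((hasDerivAt_const (x j) t).sub (hT0 j)).div ((hT1 j).sub (hT0 j))
        (by simpa [Function.update_eq_self] using hδ)
      simp only [Pi.sub_apply, Function.update_eq_self] at hq
      have hinner : HasDerivAt (fun y => ((Function.update x j y : Fin N → ℝ),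
          (t - τ₀ (Function.update x j y)) / (τ₁ (Function.update x j y) - τ₀ (Function.update x j y))))
          ((Pi.single j 1 : Fin N → ℝ), W j) (x j) := (hasDerivAt_update x j (x j)).prodMk hq
      have hD' : HasFDerivAt uhat D (Function.update x j (x j),
          (t - τ₀ (Function.update x j (x j))) /
            (τ₁ (Function.update x j (x j)) - τ₀ (Function.update x j (x j)))) := by
        simp only [Function.update_eq_self]; exact hD
      have hfd' : HasDerivAt (fun z => f z j) (B j) (uhat (Function.update x j (x j),
          (t - τ₀ (Function.update x j (x j))) /
            (τ₁ (Function.update x j (x j)) - τ₀ (Function.update x j (x j))))) := by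
        simp only [Function.update_eq_self]; exact hfd j
      simp only [hu, Px]
      exact (hfd'.comp (x j) (hD'.comp_hasDerivAt (x j) hinner)).deriv
    -- RHS time derivative
    have hU1 : HasDerivAt (fun σ => uhat (x, σ)) (D (0, 1)) s :=
      hD.comp_hasDerivAt s ((hasDerivAt_const s x).prodMk (hasDerivAt_id s))
    have hφ : ∀ j : Fin N, HasDerivAt (fun σ : ℝ => (1 - σ) * T0 j + σ * T1 j)
        ((0 - 1) * T0 j + 1 * T1 j) s := fun j =>
      (((hasDerivAt_const s (1:ℝ)).sub (hasDerivAt_id s)).mul_const (T0 j)).add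
        ((hasDerivAt_id s).mul_const (T1 j))
    have hfj1 : ∀ j, HasDerivAt (fun σ => f (uhat (x, σ)) j) (B j * D (0, 1)) s := fun j =>
      by have := (hfd j).comp s hU1; exact this
    have hR1 : Pt N (fun q => g (uhat q)
          - ∑ j, f (uhat q) j * ((1 - q.2) * Px N j (fun r => τ₀ r.1) q
              + q.2 * Px N j (fun r => τ₁ r.1) q)) (x, s)
        = A * D (0, 1)
          - ∑ j, (B j * D (0, 1) * ((1 - s) * T0 j + s * T1 j)
              + f (uhat (x, s)) j * ((0 - 1) * T0 j + 1 * T1 j)) := by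
      simp only [Pt]
      exact ((hgd.comp s hU1).sub
        (HasDerivAt.fun_sum fun j _ => (hfj1 j).mul (hφ j))).deriv
    -- RHS space derivatives
    have hR2 : ∀ j, Px N j (fun q => (τ₁ q.1 - τ₀ q.1) * f (uhat q) j) (x, s)
        = (T1 j - T0 j) * f (uhat (x, s)) j + δx * (B j * D (Pi.single j 1, 0)) := by
      intro j
      have hD'' : HasFDerivAt uhat D (Function.update x j (x j), s) := by
        simp only [Function.update_eq_self]; exact hD
      have hfd'' : HasDerivAt (fun z => f z j) (B j) (uhat (Function.update x j (x j), s)) := by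
        simp only [Function.update_eq_self]; exact hfd j
      have hcomp : HasDerivAt (fun y => f (uhat (Function.update x j y, s)) j)
          (B j * D (Pi.single j 1, 0)) (x j) :=
        by have := hfd''.comp (x j) (hD''.comp_hasDerivAt (x j)
          ((hasDerivAt_update x j (x j)).prodMk (hasDerivAt_const (x j) s))); exact this
      have h := (((hT1 j).fun_sub (hT0 j)).fun_mul hcomp).deriv
      simp only [Function.update_eq_self] at h
      simpa only [Px] using h
    -- assemble
    rw [hL1, hDt]
    rw [show (∑ j, Px N j (fun q => f (u q) j) (x, t))
        = ∑ j, (1 / δx) * (-(B j * D (0, 1) * ((1 - s) * T0 j + s * T1 j)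
              + f (uhat (x, s)) j * ((0 - 1) * T0 j + 1 * T1 j))
            + ((T1 j - T0 j) * f (uhat (x, s)) j + δx * (B j * D (Pi.single j 1, 0)))) from
      Finset.sum_congr rfl fun j _ => by
        rw [hL2 j, hDx j]
        simp only [hWd, hsd, hδxd]
        have hδ' : τ₁ x - τ₀ x ≠ 0 := by rw [← hδxd]; exact hδ
        field_simp
        ring]
    rw [← Finset.mul_sum]
    have hE := hcyl (x, s) hxp ⟨hs0, hs1⟩
    rw [hR1] at hE
    rw [show (∑ j, Px N j (fun q => (τ₁ q.1 - τ₀ q.1) * f (uhat q) j) (x, s))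
        = ∑ j, ((T1 j - T0 j) * f (uhat (x, s)) j + δx * (B j * D (Pi.single j 1, 0))) from
      Finset.sum_congr rfl fun j _ => hR2 j] at hE
    simp only [Finset.sum_add_distrib, Finset.sum_neg_distrib] at hE ⊢
    linear_combination (1 / δx) * hE
end

section
/- Tent pole update preserves edge CFL: suppose τ : vertices → ℝ satisfies |τ(e₁) − τ(e₂)| ≤ C_𝒯 |e|/c_e for every edge e with endpoints e₁, e₂, length |e| and speed bound c_e > 0. Fix a vertex v and let k ≥ 0 satisfy k ≤ min over edges e containing v (with e₁ = v) of (τ(e₂) − τ(v) + |e| C_𝒯 / c_e). Then the updated function τ' with τ'(v) = τ(v) + k and τ'(w) = τ(w) for w ≠ v again satisfies |τ'(e₁) − τ'(e₂)| ≤ C_𝒯 |e|/c_e for every edge e. -/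
/-- the tent pole update preserves the edge CFL condition.
Vertices `V`, edges `E` with endpoints `e₁ e, e₂ e`, lengths `len e > 0` and
speeds `ce e > 0`.  If `τ` satisfies `|τ(e₁) - τ(e₂)| ≤ C_𝒯 |e| / c_e` on
every edge and `k ≥ 0` is below the admissible advance at the vertex `v`
(over each edge containing `v`), then the updated front `τ'` (equal to
`τ(v) + k` at `v` and to `τ` elsewhere) satisfies the same condition. -/
theorem stmt_7 (V E : Type*) [DecidableEq V]
    (e₁ e₂ : E → V) (len ce : E → ℝ)
    (hlen : ∀ e, 0 < len e) (hce : ∀ e, 0 < ce e)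
    (CT : ℝ) (hCT : 0 < CT)
    (τ : V → ℝ)
    (hτ : ∀ e, |τ (e₁ e) - τ (e₂ e)| ≤ CT * len e / ce e)
    (v : V) (k : ℝ) (hk0 : 0 ≤ k)
    (hk₁ : ∀ e, e₁ e = v → k ≤ τ (e₂ e) - τ v + len e * CT / ce e)
    (hk₂ : ∀ e, e₂ e = v → k ≤ τ (e₁ e) - τ v + len e * CT / ce e)
    (τ' : V → ℝ) (hτ' : τ' = Function.update τ v (τ v + k)) :
    ∀ e, |τ' (e₁ e) - τ' (e₂ e)| ≤ CT * len e / ce e := by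
  intro e
  subst hτ'
  have hb := hτ e
  have hpos : 0 ≤ CT * len e / ce e :=
    div_nonneg (mul_nonneg hCT.le (hlen e).le) (hce e).le
  have hcomm : len e * CT / ce e = CT * len e / ce e := by ring
  by_cases h1 : e₁ e = v <;> by_cases h2 : e₂ e = v <;>
    simp [Function.update_apply, h1, h2]
  · exact hpos
  · have := hk₁ e h1
    rw [hcomm] at this
    rw [h1] at hb
    rw [abs_le] at hb ⊢
    exact ⟨by linarith [hb.1], by linarith⟩
  · have := hk₂ e h2
    rw [hcomm] at this
    rw [h2] at hb
    rw [abs_le] at hb ⊢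
    exact ⟨by linarith, by linarith [hb.2]⟩
  · exact hb
end

section
/- Entropy pair mapping: let (ℰ, ℱ) with ℰ : ℝ^L → ℝ, ℱ : ℝ^L → ℝ^N be smooth, and let u be a smooth function on the tent K satisfying ∂ₜ ℰ(u) + div_x ℱ(u) = 0. Define Ê(x̂, t̂, w) = ℰ(w) − ℱ(w)·∇φ(x̂, t̂) and F̂(x̂, w) = δ(x̂)ℱ(w). Then û = u ∘ Φ satisfies ∂_{t̂} Ê(x̂, t̂, û) + div_{x̂} F̂(x̂, û) = 0 on the cylinder K̂ = Ω × (0,1). Moreover, at points where the differentiable pointwise quantity ∂ₜ ℰ(u) + div_x ℱ(u) is ≤ 0, the corresponding mapped quantity ∂_{t̂} Ê(û) + div_{x̂} F̂(û) is also ≤ 0. -/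
/-- Slice derivative in time as an fderiv. -/
theorem hasDerivAt_slice_t {N : ℕ} (h : (Fin N → ℝ) × ℝ → ℝ) (p : (Fin N → ℝ) × ℝ)
    (hd : DifferentiableAt ℝ h p) :
    HasDerivAt (fun s => h (p.1, s)) (fderiv ℝ h p (0, 1)) p.2 := by
  have hin : HasDerivAt (fun s : ℝ => ((p.1, s) : (Fin N → ℝ) × ℝ)) ((0 : Fin N → ℝ), (1 : ℝ))
      p.2 := (hasDerivAt_const p.2 p.1).prodMk (hasDerivAt_id p.2)
  exact hd.hasFDerivAt.comp_hasDerivAt_of_eq _ hin (by simp)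

theorem hasDerivAt_slice_x {N : ℕ} (j : Fin N) (h : (Fin N → ℝ) × ℝ → ℝ)
    (p : (Fin N → ℝ) × ℝ) (hd : DifferentiableAt ℝ h p) :
    HasDerivAt (fun y => h (Function.update p.1 j y, p.2))
      (fderiv ℝ h p (Pi.single j 1, 0)) (p.1 j) := by
  have hin : HasDerivAt (fun y : ℝ => ((Function.update p.1 j y, p.2) : (Fin N → ℝ) × ℝ))
      ((Pi.single j 1 : Fin N → ℝ), (0 : ℝ)) (p.1 j) :=
    (hasDerivAt_update p.1 j (p.1 j)).prodMk (hasDerivAt_const (p.1 j) p.2)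
  exact hd.hasFDerivAt.comp_hasDerivAt_of_eq _ hin (by simp)

theorem Pt_eq_fderiv {N : ℕ} (h : (Fin N → ℝ) × ℝ → ℝ) (p : (Fin N → ℝ) × ℝ)
    (hd : DifferentiableAt ℝ h p) :
    deriv (fun s => h (p.1, s)) p.2 = fderiv ℝ h p (0, 1) :=
  (hasDerivAt_slice_t h p hd).deriv

theorem Px_eq_fderiv {N : ℕ} (j : Fin N) (h : (Fin N → ℝ) × ℝ → ℝ) (p : (Fin N → ℝ) × ℝ)
    (hd : DifferentiableAt ℝ h p) :
    deriv (fun y => h (Function.update p.1 j y, p.2)) (p.1 j)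
      = fderiv ℝ h p (Pi.single j 1, 0) :=
  (hasDerivAt_slice_x j h p hd).deriv

theorem key_identity (N L : ℕ)
    (τ₀ τ₁ : (Fin N → ℝ) → ℝ) (hτ₀ : ContDiff ℝ (⊤ : ℕ∞) τ₀) (hτ₁ : ContDiff ℝ (⊤ : ℕ∞) τ₁)
    (ℰ : (Fin L → ℝ) → ℝ) (ℱ : (Fin L → ℝ) → Fin N → ℝ)
    (hℰ : ContDiff ℝ (⊤ : ℕ∞) ℰ) (hℱ : ContDiff ℝ (⊤ : ℕ∞) ℱ)
    (u : (Fin N → ℝ) × ℝ → Fin L → ℝ) (hu : ContDiff ℝ (⊤ : ℕ∞) u)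
    (x : Fin N → ℝ) (t : ℝ) :
    Pt N (fun q => ℰ (u (q.1, (1 - q.2) * τ₀ q.1 + q.2 * τ₁ q.1))
            - ∑ j, ℱ (u (q.1, (1 - q.2) * τ₀ q.1 + q.2 * τ₁ q.1)) j
                * ((1 - q.2) * Px N j (fun r => τ₀ r.1) q
                   + q.2 * Px N j (fun r => τ₁ r.1) q)) (x, t)
    + ∑ j, Px N j (fun q => (τ₁ q.1 - τ₀ q.1)
            * ℱ (u (q.1, (1 - q.2) * τ₀ q.1 + q.2 * τ₁ q.1)) j) (x, t)
    = (τ₁ x - τ₀ x)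
      * (Pt N (fun q => ℰ (u q)) (x, (1 - t) * τ₀ x + t * τ₁ x)
         + ∑ j, Px N j (fun q => ℱ (u q) j) (x, (1 - t) * τ₀ x + t * τ₁ x)) := by
  classical
  have hDG : DifferentiableAt ℝ (fun q : (Fin N → ℝ) × ℝ => ℰ (u q))
      ((x, (1 - t) * τ₀ x + t * τ₁ x) : (Fin N → ℝ) × ℝ) :=
    ((hℰ.comp hu).differentiable (by simp)) _
  have hDH : ∀ j, DifferentiableAt ℝ (fun q : (Fin N → ℝ) × ℝ => ℱ (u q) j)
      ((x, (1 - t) * τ₀ x + t * τ₁ x) : (Fin N → ℝ) × ℝ) :=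
    fun j => ((contDiff_pi.mp (hℱ.comp hu) j).differentiable (by simp)) _
  -- spatial derivatives of τ₀, τ₁ along the j-th coordinate
  have hτ0j : ∀ j, HasDerivAt (fun y => τ₀ (Function.update x j y))
      (fderiv ℝ τ₀ x (Pi.single j 1)) (x j) := fun j =>
    ((hτ₀.differentiable (by simp) x).hasFDerivAt).comp_hasDerivAt_of_eq _
      (hasDerivAt_update x j (x j)) (by simp)
  have hτ1j : ∀ j, HasDerivAt (fun y => τ₁ (Function.update x j y))
      (fderiv ℝ τ₁ x (Pi.single j 1)) (x j) := fun j =>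
    ((hτ₁.differentiable (by simp) x).hasFDerivAt).comp_hasDerivAt_of_eq _
      (hasDerivAt_update x j (x j)) (by simp)
  have hτup : ∀ j : Fin N, Function.update x j (x j) = x := fun j => Function.update_eq_self j x
  -- unfold the partial-derivative notations
  simp only [Pt, Px]
  have d0 : ∀ j, deriv (fun y => τ₀ (Function.update x j y)) (x j)
      = fderiv ℝ τ₀ x (Pi.single j 1) := fun j => (hτ0j j).deriv
  have d1 : ∀ j, deriv (fun y => τ₁ (Function.update x j y)) (x j)
      = fderiv ℝ τ₁ x (Pi.single j 1) := fun j => (hτ1j j).deriv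
  simp only [d0, d1]
  -- time-slope of the tent map
  have hφs : HasDerivAt (fun s : ℝ => (1 - s) * τ₀ x + s * τ₁ x) (τ₁ x - τ₀ x) t := by
    have h : HasDerivAt (fun s : ℝ => (1 - s) * τ₀ x + s * τ₁ x)
        ((-1) * τ₀ x + 1 * τ₁ x) t :=
      (((hasDerivAt_id t).const_sub 1).mul_const (τ₀ x)).add
        ((hasDerivAt_id t).mul_const (τ₁ x))
    have e : (-1) * τ₀ x + 1 * τ₁ x = τ₁ x - τ₀ x := by ring
    rwa [e] at h
  have hw : HasDerivAt (fun s : ℝ => ((x, (1 - s) * τ₀ x + s * τ₁ x) : (Fin N → ℝ) × ℝ))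
      ((0 : Fin N → ℝ), τ₁ x - τ₀ x) t := (hasDerivAt_const t x).prodMk hφs
  have hGs : HasDerivAt (fun s : ℝ => ℰ (u (x, (1 - s) * τ₀ x + s * τ₁ x)))
      (fderiv ℝ (fun q => ℰ (u q)) ((x, (1 - t) * τ₀ x + t * τ₁ x) : (Fin N → ℝ) × ℝ)
        ((0 : Fin N → ℝ), τ₁ x - τ₀ x)) t :=
    hDG.hasFDerivAt.comp_hasDerivAt_of_eq _ hw rfl
  have hHs : ∀ j, HasDerivAt (fun s : ℝ => ℱ (u (x, (1 - s) * τ₀ x + s * τ₁ x)) j)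
      (fderiv ℝ (fun q => ℱ (u q) j) ((x, (1 - t) * τ₀ x + t * τ₁ x) : (Fin N → ℝ) × ℝ)
        ((0 : Fin N → ℝ), τ₁ x - τ₀ x)) t :=
    fun j => (hDH j).hasFDerivAt.comp_hasDerivAt_of_eq _ hw rfl
  have hcs : ∀ j, HasDerivAt (fun s : ℝ =>
      (1 - s) * fderiv ℝ τ₀ x (Pi.single j 1) + s * fderiv ℝ τ₁ x (Pi.single j 1))
      (fderiv ℝ τ₁ x (Pi.single j 1) - fderiv ℝ τ₀ x (Pi.single j 1)) t := by
    intro j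
    have h : HasDerivAt (fun s : ℝ =>
        (1 - s) * fderiv ℝ τ₀ x (Pi.single j 1) + s * fderiv ℝ τ₁ x (Pi.single j 1))
        ((-1) * fderiv ℝ τ₀ x (Pi.single j 1) + 1 * fderiv ℝ τ₁ x (Pi.single j 1)) t :=
      (((hasDerivAt_id t).const_sub 1).mul_const _).add ((hasDerivAt_id t).mul_const _)
    have e : (-1) * fderiv ℝ τ₀ x (Pi.single j 1) + 1 * fderiv ℝ τ₁ x (Pi.single j 1)
        = fderiv ℝ τ₁ x (Pi.single j 1) - fderiv ℝ τ₀ x (Pi.single j 1) := by ring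
    rwa [e] at h
  -- derivative of the big time-slice
  have hbig : HasDerivAt (fun s : ℝ =>
      ℰ (u (x, (1 - s) * τ₀ x + s * τ₁ x)) -
        ∑ j, ℱ (u (x, (1 - s) * τ₀ x + s * τ₁ x)) j *
          ((1 - s) * fderiv ℝ τ₀ x (Pi.single j 1) + s * fderiv ℝ τ₁ x (Pi.single j 1)))
      (fderiv ℝ (fun q => ℰ (u q)) ((x, (1 - t) * τ₀ x + t * τ₁ x) : (Fin N → ℝ) × ℝ)
          ((0 : Fin N → ℝ), τ₁ x - τ₀ x)
        - ∑ j, (fderiv ℝ (fun q => ℱ (u q) j)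
              ((x, (1 - t) * τ₀ x + t * τ₁ x) : (Fin N → ℝ) × ℝ)
              ((0 : Fin N → ℝ), τ₁ x - τ₀ x) *
            ((1 - t) * fderiv ℝ τ₀ x (Pi.single j 1) + t * fderiv ℝ τ₁ x (Pi.single j 1))
          + ℱ (u (x, (1 - t) * τ₀ x + t * τ₁ x)) j *
            (fderiv ℝ τ₁ x (Pi.single j 1) - fderiv ℝ τ₀ x (Pi.single j 1)))) t :=
    hGs.sub (HasDerivAt.fun_sum fun j _ => (hHs j).fun_mul (hcs j))
  rw [hbig.deriv]
  -- derivative of the flux slices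
  have hφxj : ∀ j, HasDerivAt (fun y =>
      (1 - t) * τ₀ (Function.update x j y) + t * τ₁ (Function.update x j y))
      ((1 - t) * fderiv ℝ τ₀ x (Pi.single j 1) + t * fderiv ℝ τ₁ x (Pi.single j 1)) (x j) :=
    fun j => ((hτ0j j).const_mul (1 - t)).add ((hτ1j j).const_mul t)
  have hvin : ∀ j, HasDerivAt (fun y =>
      ((Function.update x j y,
        (1 - t) * τ₀ (Function.update x j y) + t * τ₁ (Function.update x j y)) :
        (Fin N → ℝ) × ℝ))
      ((Pi.single j 1 : Fin N → ℝ),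
        (1 - t) * fderiv ℝ τ₀ x (Pi.single j 1) + t * fderiv ℝ τ₁ x (Pi.single j 1)) (x j) :=
    fun j => (hasDerivAt_update x j (x j)).prodMk (hφxj j)
  have hHx : ∀ j, HasDerivAt (fun y =>
      ℱ (u (Function.update x j y,
        (1 - t) * τ₀ (Function.update x j y) + t * τ₁ (Function.update x j y))) j)
      (fderiv ℝ (fun q => ℱ (u q) j) ((x, (1 - t) * τ₀ x + t * τ₁ x) : (Fin N → ℝ) × ℝ)
        ((Pi.single j 1 : Fin N → ℝ),
          (1 - t) * fderiv ℝ τ₀ x (Pi.single j 1) + t * fderiv ℝ τ₁ x (Pi.single j 1))) (x j) :=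
    fun j => (hDH j).hasFDerivAt.comp_hasDerivAt_of_eq _ (hvin j) (by simp [hτup j])
  have hδj : ∀ j, HasDerivAt (fun y =>
      τ₁ (Function.update x j y) - τ₀ (Function.update x j y))
      (fderiv ℝ τ₁ x (Pi.single j 1) - fderiv ℝ τ₀ x (Pi.single j 1)) (x j) :=
    fun j => (hτ1j j).sub (hτ0j j)
  have hflux : ∀ j, deriv (fun y =>
      (τ₁ (Function.update x j y) - τ₀ (Function.update x j y)) *
        ℱ (u (Function.update x j y,
          (1 - t) * τ₀ (Function.update x j y) + t * τ₁ (Function.update x j y))) j) (x j)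
      = (fderiv ℝ τ₁ x (Pi.single j 1) - fderiv ℝ τ₀ x (Pi.single j 1)) *
          ℱ (u (x, (1 - t) * τ₀ x + t * τ₁ x)) j
        + (τ₁ x - τ₀ x) *
          fderiv ℝ (fun q => ℱ (u q) j) ((x, (1 - t) * τ₀ x + t * τ₁ x) : (Fin N → ℝ) × ℝ)
            ((Pi.single j 1 : Fin N → ℝ),
              (1 - t) * fderiv ℝ τ₀ x (Pi.single j 1) + t * fderiv ℝ τ₁ x (Pi.single j 1)) := by
    intro j
    have h := ((hδj j).fun_mul (hHx j)).deriv
    simpa [hτup j] using h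
  simp only [hflux]
  -- the right-hand side partial derivatives
  have E3 : deriv (fun s => ℰ (u (x, s))) ((1 - t) * τ₀ x + t * τ₁ x)
      = fderiv ℝ (fun q => ℰ (u q)) ((x, (1 - t) * τ₀ x + t * τ₁ x) : (Fin N → ℝ) × ℝ)
          ((0 : Fin N → ℝ), 1) := by
    exact (hasDerivAt_slice_t _ _ hDG).deriv
  have E4 : ∀ j, deriv (fun y => ℱ (u (Function.update x j y, (1 - t) * τ₀ x + t * τ₁ x)) j)
      (x j)
      = fderiv ℝ (fun q => ℱ (u q) j) ((x, (1 - t) * τ₀ x + t * τ₁ x) : (Fin N → ℝ) × ℝ)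
          ((Pi.single j 1 : Fin N → ℝ), 0) := by
    intro j
    exact (hasDerivAt_slice_x j _ _ (hDH j)).deriv
  rw [E3]
  simp only [E4]
  -- linear algebra on the Fréchet derivatives
  have lin1 : ∀ D : ((Fin N → ℝ) × ℝ) →L[ℝ] ℝ,
      D ((0 : Fin N → ℝ), τ₁ x - τ₀ x) = (τ₁ x - τ₀ x) * D ((0 : Fin N → ℝ), 1) := by
    intro D
    have e : ((0 : Fin N → ℝ), τ₁ x - τ₀ x)
        = (τ₁ x - τ₀ x) • (((0 : Fin N → ℝ), 1) : (Fin N → ℝ) × ℝ) := by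
      simp [Prod.ext_iff]
    rw [e, map_smul, smul_eq_mul]
  have lin2 : ∀ (D : ((Fin N → ℝ) × ℝ) →L[ℝ] ℝ) (j : Fin N),
      D ((Pi.single j 1 : Fin N → ℝ),
          (1 - t) * fderiv ℝ τ₀ x (Pi.single j 1) + t * fderiv ℝ τ₁ x (Pi.single j 1))
        = D ((Pi.single j 1 : Fin N → ℝ), 0)
          + ((1 - t) * fderiv ℝ τ₀ x (Pi.single j 1) + t * fderiv ℝ τ₁ x (Pi.single j 1))
            * D ((0 : Fin N → ℝ), 1) := by
    intro D j
    have e : ((Pi.single j 1 : Fin N → ℝ),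
        (1 - t) * fderiv ℝ τ₀ x (Pi.single j 1) + t * fderiv ℝ τ₁ x (Pi.single j 1))
        = ((Pi.single j 1 : Fin N → ℝ), (0 : ℝ))
          + ((1 - t) * fderiv ℝ τ₀ x (Pi.single j 1) + t * fderiv ℝ τ₁ x (Pi.single j 1))
            • (((0 : Fin N → ℝ), 1) : (Fin N → ℝ) × ℝ) := by
      simp [Prod.ext_iff]
    rw [e, map_add, map_smul, smul_eq_mul]
  simp only [lin1, lin2]
  -- now a purely algebraic identity
  rw [mul_add, Finset.mul_sum, sub_add_eq_add_sub, add_sub_assoc, ← Finset.sum_sub_distrib]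
  congr 1
  exact Finset.sum_congr rfl fun j _ => by ring

/-- mapping of an entropy pair.  If `(ℰ,ℱ)` is smooth and the smooth
function `u` satisfies `∂ₜ ℰ(u) + div_x ℱ(u) = 0` on the tent `K`, then with
`Ê(x̂,t̂,w) = ℰ(w) - ℱ(w)·∇φ(x̂,t̂)` and `F̂(x̂,w) = δ(x̂) ℱ(w)`, the mapped
function `û = u ∘ Φ` satisfies `∂_t̂ Ê(û) + div_x̂ F̂(û) = 0` on the cylinder
`Ω × (0,1)`.  Moreover (without any equation assumed), at a point of the
cylinder where `∂ₜ ℰ(u) + div_x ℱ(u) ≤ 0` holds at the image point on the tent,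
the mapped quantity `∂_t̂ Ê(û) + div_x̂ F̂(û)` is also `≤ 0`. -/
theorem stmt_10 (N L : ℕ) (hN : 1 ≤ N) (hL : 1 ≤ L)
    (Ω : Set (Fin N → ℝ)) (hΩ : IsOpen Ω)
    (τ₀ τ₁ : (Fin N → ℝ) → ℝ)
    (hτ₀ : ContDiff ℝ (⊤ : ℕ∞) τ₀) (hτ₁ : ContDiff ℝ (⊤ : ℕ∞) τ₁)
    (hlt : ∀ x ∈ Ω, τ₀ x < τ₁ x)
    (ℰ : (Fin L → ℝ) → ℝ) (ℱ : (Fin L → ℝ) → Fin N → ℝ)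
    (hℰ : ContDiff ℝ (⊤ : ℕ∞) ℰ) (hℱ : ContDiff ℝ (⊤ : ℕ∞) ℱ)
    (u : (Fin N → ℝ) × ℝ → Fin L → ℝ) (hu : ContDiff ℝ (⊤ : ℕ∞) u)
    (Φ : ((Fin N → ℝ) × ℝ) → ((Fin N → ℝ) × ℝ))
    (hΦ : ∀ p : (Fin N → ℝ) × ℝ,
      Φ p = (p.1, (1 - p.2) * τ₀ p.1 + p.2 * τ₁ p.1)) :
    -- (i) entropy conservation maps to entropy conservation
    ((∀ p : (Fin N → ℝ) × ℝ, p.1 ∈ Ω → p.2 ∈ Set.Ioo (τ₀ p.1) (τ₁ p.1) →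
        Pt N (fun q => ℰ (u q)) p + ∑ j, Px N j (fun q => ℱ (u q) j) p = 0) →
      ∀ ph : (Fin N → ℝ) × ℝ, ph.1 ∈ Ω → ph.2 ∈ Set.Ioo (0:ℝ) 1 →
        Pt N (fun q => ℰ (u (Φ q))
                - ∑ j, ℱ (u (Φ q)) j
                    * ((1 - q.2) * Px N j (fun r => τ₀ r.1) q
                       + q.2 * Px N j (fun r => τ₁ r.1) q)) ph
        + ∑ j, Px N j (fun q => (τ₁ q.1 - τ₀ q.1) * ℱ (u (Φ q)) j) ph = 0) ∧
    -- (ii) pointwise transfer of the entropy admissibility sign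
    (∀ ph : (Fin N → ℝ) × ℝ, ph.1 ∈ Ω → ph.2 ∈ Set.Ioo (0:ℝ) 1 →
      Pt N (fun q => ℰ (u q)) (Φ ph)
        + ∑ j, Px N j (fun q => ℱ (u q) j) (Φ ph) ≤ 0 →
      Pt N (fun q => ℰ (u (Φ q))
              - ∑ j, ℱ (u (Φ q)) j
                  * ((1 - q.2) * Px N j (fun r => τ₀ r.1) q
                     + q.2 * Px N j (fun r => τ₁ r.1) q)) ph
      + ∑ j, Px N j (fun q => (τ₁ q.1 - τ₀ q.1) * ℱ (u (Φ q)) j) ph ≤ 0) := by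
  classical
  have key := key_identity N L τ₀ τ₁ hτ₀ hτ₁ ℰ ℱ hℰ hℱ u hu
  constructor
  · intro hcons ph hx ht
    obtain ⟨x, t⟩ := ph
    simp only [hΦ] at hx ht ⊢
    rw [key x t]
    have hmem : ((1 - t) * τ₀ x + t * τ₁ x) ∈ Set.Ioo (τ₀ x) (τ₁ x) := by
      obtain ⟨h0, h1⟩ := ht
      have hl := hlt x hx
      constructor <;> nlinarith
    have h0 := hcons (x, (1 - t) * τ₀ x + t * τ₁ x) hx hmem
    rw [h0, mul_zero]
  · intro ph hx ht hle
    obtain ⟨x, t⟩ := ph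
    simp only [hΦ] at hx ht hle ⊢
    rw [key x t]
    have hδ : (0:ℝ) ≤ τ₁ x - τ₀ x := by have := hlt x hx; linarith
    exact mul_nonpos_of_nonneg_of_nonpos hδ hle
end
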